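/- Let d ≥ 2, M = 2^d, and let f : {0, …, M−1} → {0,1} be any Boolean function with associated hypergraph state |G⟩. Define m₁ = ⟨G| a†a |G⟩, m₂ = ⟨G| (a†)²a² |G⟩, μ₁ = ⟨G| N̂ |G⟩, μ₂ = ⟨G| N̂² |G⟩, and the Agarwal–Tara parameter A₂ = (m₂ − m₁²) / ((μ₂ − μ₁²) − (m₂ − m₁²)). Then A₂ = (2^d − 5)/6 for every hypergraph state on d vertices; in particular A₂ < 0 if and only if d = 2. -/

import Mathlib

/-!
Since `a†²a² = N̂² − N̂`, we have `m₂ = μ₂ − μ₁` (and `m₁ = μ₁`), so the denominator of `A₂` is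
`μ₁` and `A₂ = (μ₂ − μ₁²)/μ₁ − 1` is Mandel's `Q` parameter. A hypergraph state has flat
amplitudes `|⟨n|G⟩|² = 1/M`, so in it `N̂ = diag(0, …, M − 1)` is uniformly distributed:
`μ₁ = (M − 1)/2` and `μ₂ − μ₁² = (M² − 1)/12`, whence `A₂ = (M + 1)/6 − 1 = (M − 5)/6`.
-/

open Matrix

/-- The truncated annihilation operator on `ℂ^M`: `a |n⟩ = √n |n-1⟩`. -/
noncomputable def ann (M : ℕ) : Matrix (Fin M) (Fin M) ℂ :=
  Matrix.of fun k l => if (k : ℕ) + 1 = (l : ℕ) then ((Real.sqrt (l : ℕ) : ℝ) : ℂ) else 0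

noncomputable def hgState (M : ℕ) (f : Fin M → Fin 2) : Fin M → ℂ :=
  fun n => (-1 : ℂ) ^ (f n : ℕ) / ((Real.sqrt M : ℝ) : ℂ)

/-- The truncated subtraction `k - 1` is harmless: at `k = 0` the factor `k` vanishes. -/
theorem conjTranspose_ann_mul_diagonal_mul_ann (M : ℕ) (c : ℕ → ℂ) :
    (ann M)ᴴ * diagonal (fun j : Fin M => c j) * ann M
      = diagonal fun k : Fin M => (k : ℂ) * c (k - 1) := by
  ext k l
  rw [mul_apply]
  simp only [mul_diagonal, conjTranspose_apply, ann, of_apply, diagonal_apply]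
  rcases Nat.eq_zero_or_pos (k : ℕ) with hk | hk
  · simp [hk]
  · have hpred : (k : ℕ) - 1 < M := by omega
    rw [Fintype.sum_eq_single ⟨(k : ℕ) - 1, hpred⟩]
    · by_cases hkl : k = l
      · subst hkl
        simp only [if_pos (by omega : (k : ℕ) - 1 + 1 = k), if_true]
        rw [Complex.star_def, Complex.conj_ofReal, mul_right_comm, ← Complex.ofReal_mul,
          Real.mul_self_sqrt (Nat.cast_nonneg _)]
        norm_cast
      · have hkl' : (k : ℕ) - 1 + 1 ≠ l := fun h => hkl (Fin.ext (by omega))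
        simp [hkl, hkl']
    · intro j hj
      rw [if_neg, star_zero, zero_mul, zero_mul]
      exact fun h => hj (Fin.ext (Nat.eq_sub_of_add_eq h))

theorem conjTranspose_ann_mul_ann (M : ℕ) :
    (ann M)ᴴ * ann M = diagonal fun k : Fin M => (k : ℂ) := by
  simpa using conjTranspose_ann_mul_diagonal_mul_ann M 1

theorem conjTranspose_ann_sq_mul_ann_sq (M : ℕ) :
    (ann M)ᴴ ^ 2 * ann M ^ 2 = ((ann M)ᴴ * ann M) ^ 2 - (ann M)ᴴ * ann M := by
  have hN := conjTranspose_ann_mul_diagonal_mul_ann M (fun j => j)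
  rw [show (ann M)ᴴ ^ 2 * ann M ^ 2 = (ann M)ᴴ * ((ann M)ᴴ * ann M) * ann M by noncomm_ring,
    conjTranspose_ann_mul_ann, hN, sq, diagonal_mul_diagonal, diagonal_sub]
  congr 1
  funext k
  rcases Nat.eq_zero_or_pos (k : ℕ) with hk | hk
  · simp [hk]
  · rw [Nat.cast_sub hk]
    ring

theorem star_hgState_mul_self (M : ℕ) (f : Fin M → Fin 2) (k : Fin M) :
    star (hgState M f k) * hgState M f k = (M : ℂ)⁻¹ := by
  rw [Complex.star_def, Complex.conj_mul']
  simp [hgState, ← Complex.ofReal_pow]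

theorem hgState_expectation_diagonal (M : ℕ) (f : Fin M → Fin 2) (c : Fin M → ℂ) :
    star (hgState M f) ⬝ᵥ (diagonal c *ᵥ hgState M f) = (∑ k, c k) / M := by
  simp only [dotProduct, Pi.star_apply, mulVec_diagonal, mul_left_comm _ (c _),
    star_hgState_mul_self, ← Finset.sum_mul, div_eq_mul_inv]

theorem Finset.sum_range_cast_mul_two {R : Type*} [CommRing R] (n : ℕ) :
    (∑ i ∈ Finset.range n, (i : R)) * 2 = n * (n - 1) := by
  induction n with
  | zero => simp
  | succ n ih => rw [Finset.sum_range_succ, add_mul, ih]; push_cast; ring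

theorem Finset.sum_range_cast_sq_mul_six {R : Type*} [CommRing R] (n : ℕ) :
    (∑ i ∈ Finset.range n, (i : R) ^ 2) * 6 = n * (n - 1) * (2 * n - 1) := by
  induction n with
  | zero => simp
  | succ n ih => rw [Finset.sum_range_succ, add_mul, ih]; push_cast; ring

section hgState

variable {M : ℕ} (f : Fin M → Fin 2)

theorem hgState_number_mean (hM : M ≠ 0) :
    star (hgState M f) ⬝ᵥ (((ann M)ᴴ * ann M) *ᵥ hgState M f) = ((M : ℂ) - 1) / 2 := by
  have h := Finset.sum_range_cast_mul_two (R := ℂ) M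
  rw [conjTranspose_ann_mul_ann, hgState_expectation_diagonal,
    Fin.sum_univ_eq_sum_range (fun i => (i : ℂ))]
  field_simp
  linear_combination h

theorem hgState_number_sq_mean (hM : M ≠ 0) :
    star (hgState M f) ⬝ᵥ (((ann M)ᴴ * ann M) ^ 2 *ᵥ hgState M f)
      = ((M : ℂ) - 1) * (2 * M - 1) / 6 := by
  have h := Finset.sum_range_cast_sq_mul_six (R := ℂ) M
  rw [conjTranspose_ann_mul_ann, sq, diagonal_mul_diagonal, hgState_expectation_diagonal,
    Fin.sum_univ_eq_sum_range (fun i => (i : ℂ) * i)]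
  field_simp
  linear_combination h

end hgState

theorem two_pow_sub_five_div_six_neg_iff {d : ℕ} (hd : 2 ≤ d) :
    ((2 : ℝ) ^ d - 5) / 6 < 0 ↔ d = 2 := by
  constructor
  · intro h
    by_contra hne
    have : (2 : ℝ) ^ 3 ≤ 2 ^ d := pow_le_pow_right₀ one_le_two (by omega)
    linarith
  · rintro rfl
    norm_num

/-- the Agarwal–Tara parameter
`A₂ = (m₂ − m₁²)/((μ₂ − μ₁²) − (m₂ − m₁²))` of any hypergraph state on `d ≥ 2`
vertices equals `(2^d − 5)/6`; in particular it is negative iff `d = 2`. -/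
theorem agarwal_tara_A2 (d : ℕ) (hd : 2 ≤ d) (f : Fin (2 ^ d) → Fin 2) :
    let a := ann (2 ^ d)
    let G := hgState (2 ^ d) f
    let m1 := star G ⬝ᵥ ((aᴴ * a).mulVec G)
    let m2 := star G ⬝ᵥ ((aᴴ ^ 2 * a ^ 2).mulVec G)
    let μ1 := star G ⬝ᵥ ((aᴴ * a).mulVec G)
    let μ2 := star G ⬝ᵥ (((aᴴ * a) ^ 2).mulVec G)
    (m2 - m1 ^ 2) / ((μ2 - μ1 ^ 2) - (m2 - m1 ^ 2)) = ((2 ^ d : ℂ) - 5) / 6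
      ∧ ((((2 : ℝ) ^ d - 5) / 6 < 0) ↔ d = 2) := by
  intro a G m1 m2 μ1 μ2
  have hM : 2 ^ d ≠ 0 := by positivity
  have hm2 : m2 = μ2 - μ1 := by
    simp only [m2, μ2, μ1, a, conjTranspose_ann_sq_mul_ann_sq, sub_mulVec, dotProduct_sub]
  have hμ1 : μ1 = ((2 ^ d : ℕ) - 1) / 2 := hgState_number_mean f hM
  have hμ2 : μ2 = ((2 ^ d : ℕ) - 1) * (2 * (2 ^ d : ℕ) - 1) / 6 := hgState_number_sq_mean f hM
  have hM1 : ((2 ^ d : ℕ) : ℂ) - 1 ≠ 0 := by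
    rw [sub_ne_zero, Nat.cast_ne_one]
    exact (Nat.one_lt_two_pow (by omega)).ne'
  refine ⟨?_, two_pow_sub_five_div_six_neg_iff hd⟩
  rw [show m1 = μ1 from rfl, hm2, hμ2, hμ1]
  field_simp
  push_cast
  ring
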